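/- Let B be a bounded self-adjoint operator on a complex Hilbert space X with ‖B‖ ≤ 1 such that -1 is not an eigenvalue of B. Let f ∈ X satisfy P f = 0, where P is the orthogonal projection onto ker(B - I). Then for any x_0 ∈ X, the residuals r_n = x_n - B x_n - f of the successive approximations x_{n+1} = B x_n + f converge in norm to 0. -/

import Mathlib

/-!
Since `r (n + 1) = B (r n)`, the residuals are `Bⁿ u` with `u = r 0`. For self-adjoint `B`,
`‖B²ⁿ u - B²ᵐ u‖² = ‖B²ⁿ u‖² - 2 ‖Bⁿ⁺ᵐ u‖² + ‖B²ᵐ u‖²`, and `‖Bᵏ u‖` decreases as `‖B‖ ≤ 1`,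
so `B²ⁿ u` is Cauchy. Its limit `w` satisfies `B² w = w`; as `-1` is not an eigenvalue, `B w = w`.
Then `⟪B²ⁿ u, w⟫ = ⟪u, w⟫ = 0` (both `(I - B) x₀` and `f` are orthogonal
to `ker (B - I)`), so `‖w‖² = 0`, and monotonicity of `‖Bⁿ u‖` gives `Bⁿ u → 0`.
-/

open Filter Topology
open scoped InnerProductSpace

lemma antitone_norm_pow_apply {𝕜 E : Type*} [NontriviallyNormedField 𝕜] [SeminormedAddCommGroup E]
    [NormedSpace 𝕜 E] {B : E →L[𝕜] E} (hB : ‖B‖ ≤ 1) (u : E) :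
    Antitone fun n => ‖(B ^ n) u‖ :=
  antitone_nat_of_succ_le fun n => by
    rw [pow_succ', mul_apply_eq_comp]
    exact (B.le_of_opNorm_le hB _).trans_eq (one_mul _)

lemma ContinuousLinearMap.apply_eq_self_of_sq_apply_eq_self {R M : Type*} [Semiring R]
    [AddCommGroup M] [Module R M] [TopologicalSpace M] {B : M →L[R] M}
    (hB : ∀ z, B z = -z → z = 0) {w : M} (hw : (B ^ 2) w = w) : B w = w :=
  sub_eq_zero.mp <| hB _ <| by
    rw [map_sub, ← mul_apply_eq_comp, ← sq, hw, neg_sub]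

namespace IsSelfAdjoint

variable {𝕜 E : Type*} [RCLike 𝕜] [NormedAddCommGroup E] [InnerProductSpace 𝕜 E] [CompleteSpace E]
  {B : E →L[𝕜] E}

lemma inner_pow_apply_left (hB : IsSelfAdjoint B) (n : ℕ) (x y : E) :
    ⟪(B ^ n) x, y⟫_𝕜 = ⟪x, (B ^ n) y⟫_𝕜 := by
  rw [← ContinuousLinearMap.adjoint_inner_right, (hB.pow n).adjoint_eq]

lemma inner_pow_apply_pow_apply_eq (hB : IsSelfAdjoint B) (x y : E) {a b c d : ℕ}
    (h : a + b = c + d) : ⟪(B ^ a) x, (B ^ b) y⟫_𝕜 = ⟪(B ^ c) x, (B ^ d) y⟫_𝕜 := by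
  have key : ∀ a b, ⟪(B ^ a) x, (B ^ b) y⟫_𝕜 = ⟪x, (B ^ (a + b)) y⟫_𝕜 := fun a b => by
    rw [hB.inner_pow_apply_left, ← mul_apply_eq_comp, ← pow_add]
  rw [key, key, h]

lemma norm_pow_two_mul_apply_sub_sq (hB : IsSelfAdjoint B) (u : E) (n m : ℕ) :
    ‖(B ^ (2 * n)) u - (B ^ (2 * m)) u‖ ^ 2
      = ‖(B ^ (2 * n)) u‖ ^ 2 - 2 * ‖(B ^ (n + m)) u‖ ^ 2 + ‖(B ^ (2 * m)) u‖ ^ 2 := by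
  have hsum : 2 * n + 2 * m = n + m + (n + m) := by ring
  rw [norm_sub_sq (𝕜 := 𝕜), hB.inner_pow_apply_pow_apply_eq u u hsum, inner_self_eq_norm_sq]

lemma cauchySeq_pow_two_mul_apply (hB : IsSelfAdjoint B) (hB1 : ‖B‖ ≤ 1) (u : E) :
    CauchySeq fun n => (B ^ (2 * n)) u := by
  set c : ℕ → ℝ := fun n => ‖(B ^ n) u‖ ^ 2
  have hc : Antitone c := fun n m h =>
    pow_le_pow_left₀ (norm_nonneg _) (antitone_norm_pow_apply hB1 u h) 2
  have hL : Tendsto c atTop (𝓝 (⨅ n, c n)) :=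
    tendsto_atTop_ciInf hc ⟨0, by rintro _ ⟨n, rfl⟩; positivity⟩
  refine cauchySeq_of_le_tendsto_0 (fun N => √(2 * (c (2 * N) - ⨅ n, c n)))
    (fun n m N hn hm => Real.le_sqrt_of_sq_le ?_) ?_
  · rw [dist_eq_norm, hB.norm_pow_two_mul_apply_sub_sq]
    have hcn : c (2 * n) ≤ c (2 * N) := hc (by omega)
    have hcm : c (2 * m) ≤ c (2 * N) := hc (by omega)
    have hcnm : ⨅ k, c k ≤ c (n + m) := hc.le_of_tendsto hL (n + m)
    linarith
  · have hc2 := hL.comp (tendsto_id.const_mul_atTop' two_pos)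
    simpa using ((hc2.sub_const (⨅ n, c n)).const_mul 2).sqrt

theorem tendsto_pow_apply_zero (hB : IsSelfAdjoint B) (hB1 : ‖B‖ ≤ 1)
    (hneg : ∀ z, B z = -z → z = 0) {u : E} (hu : ∀ z, B z = z → ⟪u, z⟫_𝕜 = 0) :
    Tendsto (fun n => (B ^ n) u) atTop (𝓝 0) := by
  obtain ⟨w, hw⟩ := cauchySeq_tendsto_of_complete (hB.cauchySeq_pow_two_mul_apply hB1 u)
  have hB2w : (B ^ 2) w = w := by
    refine tendsto_nhds_unique (((B ^ 2).continuous.tendsto w).comp hw)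
      ((hw.comp (tendsto_add_atTop_nat 1)).congr fun n => ?_)
    show (B ^ (2 * (n + 1))) u = (B ^ 2) ((B ^ (2 * n)) u)
    rw [← mul_apply_eq_comp, ← pow_add, mul_add, mul_one, add_comm]
  have hBw : B w = w := B.apply_eq_self_of_sq_apply_eq_self hneg hB2w
  have hw0 : w = 0 := by
    have hinner : Tendsto (fun n => ⟪(B ^ (2 * n)) u, w⟫_𝕜) atTop (𝓝 ⟪w, w⟫_𝕜) :=
      hw.inner tendsto_const_nhds
    have hzero : ∀ n, ⟪(B ^ (2 * n)) u, w⟫_𝕜 = 0 := fun n => by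
      rw [hB.inner_pow_apply_left, pow_apply_eq_iterate, Function.IsFixedPt.iterate hBw, hu w hBw]
    simp only [hzero, tendsto_const_nhds_iff] at hinner
    exact inner_self_eq_zero.mp hinner.symm
  subst hw0
  rw [tendsto_zero_iff_norm_tendsto_zero] at hw ⊢
  refine squeeze_zero (fun _ => norm_nonneg _)
    (fun n => antitone_norm_pow_apply hB1 u (Nat.mul_div_le n 2)) ?_
  exact hw.comp (Nat.tendsto_div_const_atTop two_ne_zero)

end IsSelfAdjoint

theorem stmt18 {X : Type*} [NormedAddCommGroup X] [InnerProductSpace ℂ X] [CompleteSpace X]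
    (B : X →L[ℂ] X) (hB : IsSelfAdjoint B) (hnorm : ‖B‖ ≤ 1)
    (hm1 : ∀ z : X, B z = -z → z = 0)
    (f : X) (hPf : ∀ z : X, B z = z → (inner ℂ f z : ℂ) = 0)
    (x : ℕ → X) (hrec : ∀ n, x (n + 1) = B (x n) + f) :
    Tendsto (fun n => x n - B (x n) - f) atTop (nhds 0) := by
  have hres : ∀ n, x n - B (x n) - f = (B ^ n) (x 0 - B (x 0) - f) := by
    intro n
    induction n with
    | zero => simp
    | succ n ih =>
      rw [pow_succ', mul_apply_eq_comp, ← ih, hrec, map_add, map_sub, map_sub]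
      abel
  have horth : ∀ z, B z = z → inner ℂ (x 0 - B (x 0) - f) z = 0 := fun z hz => by
    rw [inner_sub_left, inner_sub_left, ← ContinuousLinearMap.adjoint_inner_right, hB.adjoint_eq,
      hz, hPf z hz, sub_self, sub_zero]
  exact (tendsto_congr hres).mpr (hB.tendsto_pow_apply_zero hnorm hm1 horth)
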